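/- Let D₁, D₂, Dᵢ be t-structures on a triangulated category with D₁^{≤0} ⊆ Dᵢ^{≤0} ⊆ D₂^{≤0}, and set H = D₁^{≥1} ∩ D₂^{≤0}. Then Dᵢ^{≤0} = D₁^{≤0} ∗ (Dᵢ^{≤0} ∩ H) and Dᵢ^{≥1} = (Dᵢ^{≥1} ∩ H) ∗ D₂^{≥1}. -/

import Mathlib

open CategoryTheory Category Limits Pretriangulated Triangulated

variable {C : Type*} [Category C] [Preadditive C] [HasZeroObject C] [HasShift C ℤ]
  [∀ (n : ℤ), (shiftFunctor C n).Additive] [Pretriangulated C] [IsTriangulated C]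

/-- `ExtStar S T` is the class of objects `Z` fitting in a distinguished triangle
`A → Z → B → A⟦1⟧` with `A ∈ S` and `B ∈ T`. -/
def ExtStar (S T : C → Prop) : C → Prop := fun Z =>
  ∃ (A B : C) (_ : S A) (_ : T B) (f : A ⟶ Z) (g : Z ⟶ B) (h : B ⟶ A⟦(1 : ℤ)⟧),
    Triangle.mk f g h ∈ distTriang C

/-!
For `Z ∈ Dᵢ^{≤0}`, take its `t₁`-truncation triangle `A → Z → B → A⟦1⟧`. Since `A⟦1⟧` lies in
`D₁^{≤0} ⊆ Dᵢ^{≤0}`, the rotated triangle exhibits `B ∈ D₁^{≥1}` as an extension inside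
`Dᵢ^{≤0} ⊆ D₂^{≤0}`, so `B ∈ Dᵢ^{≤0} ∩ H`. Dually, the `t₂`-truncation triangle of `Z ∈ Dᵢ^{≥1}`
works because `D₂^{≥1} ⊆ Dᵢ^{≥1} ⊆ D₁^{≥1}`. The reverse inclusions are closure of aisles and
coaisles under extensions.
-/

namespace CategoryTheory.Triangulated.TStructure

omit [IsTriangulated C]

variable (t : TStructure C)

lemma isLE₃ (T : Triangle C) (hT : T ∈ distTriang C) (n : ℤ) (h₁ : t.IsLE T.obj₁ n)
    (h₂ : t.IsLE T.obj₂ n) : t.IsLE T.obj₃ n := by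
  have := t.isLE_shift T.obj₁ n 1 (n - 1)
  exact t.isLE₂ _ (rot_of_distTriang _ hT) n h₂ (t.isLE_of_le (T.obj₁⟦(1 : ℤ)⟧) (n - 1) n)

lemma isGE₁ (T : Triangle C) (hT : T ∈ distTriang C) (n : ℤ) (h₂ : t.IsGE T.obj₂ n)
    (h₃ : t.IsGE T.obj₃ n) : t.IsGE T.obj₁ n := by
  have := t.isGE_shift T.obj₃ n (-1) (n + 1)
  exact t.isGE₂ _ (inv_rot_of_distTriang _ hT) n (t.isGE_of_ge (T.obj₃⟦(-1 : ℤ)⟧) n (n + 1)) h₂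

lemma ge_one_le_of_le_zero_le {t t' : TStructure C} (h : t.le 0 ≤ t'.le 0) :
    t'.ge 1 ≤ t.ge 1 := fun X hX => by
  rw [ge_iff_isGE, t.isGE_iff_orthogonal 0 1 rfl]
  exact fun Y f hY => t'.zero' f (h _ hY.le) hX

lemma le_zero_eq_extStar {t₁ t₂ : TStructure C} (h₁ : t₁.le 0 ≤ t.le 0)
    (h₂ : t.le 0 ≤ t₂.le 0) :
    t.le 0 = ExtStar (t₁.le 0) (fun X => t.le 0 X ∧ (t₁.ge 1 X ∧ t₂.le 0 X)) := by
  ext Z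
  constructor
  · intro hZ
    obtain ⟨A, B, hA, hB, f, g, h, hT⟩ := t₁.exists_triangle_zero_one Z
    have hB' : t.le 0 B := (t.isLE₃ _ hT 0 ⟨h₁ _ hA⟩ ⟨hZ⟩).le
    exact ⟨A, B, hA, ⟨hB', hB, h₂ _ hB'⟩, f, g, h, hT⟩
  · rintro ⟨A, B, hA, hB, f, g, h, hT⟩
    exact (t.isLE₂ _ hT 0 ⟨h₁ _ hA⟩ ⟨hB.1⟩).le

lemma ge_one_eq_extStar {t₁ t₂ : TStructure C} (h₁ : t₁.le 0 ≤ t.le 0)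
    (h₂ : t.le 0 ≤ t₂.le 0) :
    t.ge 1 = ExtStar (fun X => t.ge 1 X ∧ (t₁.ge 1 X ∧ t₂.le 0 X)) (t₂.ge 1) := by
  ext Z
  constructor
  · intro hZ
    obtain ⟨A, B, hA, hB, f, g, h, hT⟩ := t₂.exists_triangle_zero_one Z
    have hA' : t.ge 1 A := (t.isGE₁ _ hT 1 ⟨hZ⟩ ⟨ge_one_le_of_le_zero_le h₂ _ hB⟩).ge
    exact ⟨A, B, ⟨hA', ge_one_le_of_le_zero_le h₁ _ hA', hA⟩, hB, f, g, h, hT⟩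
  · rintro ⟨A, B, hA, hB, f, g, h, hT⟩
    exact (t.isGE₂ _ hT 1 ⟨hA.1⟩ ⟨ge_one_le_of_le_zero_le h₂ _ hB⟩).ge

end CategoryTheory.Triangulated.TStructure

/-- For t-structures `t₁ ≤ tᵢ ≤ t₂` and `H = D₁^{≥1} ∩ D₂^{≤0}`, one has
`Dᵢ^{≤0} = D₁^{≤0} ∗ (Dᵢ^{≤0} ∩ H)` and `Dᵢ^{≥1} = (Dᵢ^{≥1} ∩ H) ∗ D₂^{≥1}`. -/
theorem stmt_7 (t₁ t₂ tᵢ : TStructure C)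
    (h₁ : t₁.le 0 ≤ tᵢ.le 0) (h₂ : tᵢ.le 0 ≤ t₂.le 0) :
    tᵢ.le 0 = ExtStar (t₁.le 0) (fun X => tᵢ.le 0 X ∧ (t₁.ge 1 X ∧ t₂.le 0 X)) ∧
    tᵢ.ge 1 = ExtStar (fun X => tᵢ.ge 1 X ∧ (t₁.ge 1 X ∧ t₂.le 0 X)) (t₂.ge 1) :=
  ⟨tᵢ.le_zero_eq_extStar h₁ h₂, tᵢ.ge_one_eq_extStar h₁ h₂⟩
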